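/- For every β ∈ ℤ, Σ_{γ∈ℤ} D₁(γ)·f₁(h(β − γ)) = 2(e^h − 1)/(e^h + 1) (the sum has only finitely many nonzero terms). -/

import Mathlib

/-- The discrete operator `D₁`: `D₁(0) = 2(1+e^{2h})/(1−e^{2h})`,
`D₁(β) = −2e^h/(1−e^{2h})` for `|β| = 1`, and `D₁(β) = 0` for `|β| ≥ 2`. -/
noncomputable def D1 (h : ℝ) (β : ℤ) : ℝ :=
  if β = 0 then 2 * (1 + Real.exp (2 * h)) / (1 - Real.exp (2 * h))
  else if β.natAbs = 1 then -2 * Real.exp h / (1 - Real.exp (2 * h))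
  else 0

/-- `f₁(t) = (e^t + e^{−t} + e^{1−t} + e^{t−1} − 4)/4`. -/
noncomputable def f1 (t : ℝ) : ℝ :=
  (Real.exp t + Real.exp (-t) + Real.exp (1 - t) + Real.exp (t - 1) - 4) / 4

/-! Sampled on the grid `hℤ`, the stencil `D₁` annihilates `t ↦ e^{t}` and `t ↦ e^{-t}`, since
`D₁(0) + D₁(1)(e^h + e^{-h}) = 0`. As `f₁ = a e^{t} + b e^{-t} - 1`, only the constant survives,
and the stencil applied to `-1` is `-(D₁(0) + 2 D₁(1)) = 2(e^h - 1)/(e^h + 1)`. -/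

open Real

lemma D1_neg (h : ℝ) (β : ℤ) : D1 h (-β) = D1 h β := by
  simp [D1]

lemma D1_zero (h : ℝ) : D1 h 0 = 2 * (1 + exp (2 * h)) / (1 - exp (2 * h)) := if_pos rfl

lemma D1_one (h : ℝ) : D1 h 1 = -2 * exp h / (1 - exp (2 * h)) := by
  simp [D1]

lemma D1_eq_zero_of_one_lt_natAbs {h : ℝ} {β : ℤ} (hβ : 1 < β.natAbs) : D1 h β = 0 := by
  simp only [D1, if_neg (show β ≠ 0 by omega), if_neg hβ.ne']

lemma one_sub_exp_two_mul_ne_zero {h : ℝ} (hh : h ≠ 0) : 1 - exp (2 * h) ≠ 0 := by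
  rw [sub_ne_zero, ne_comm, Ne, exp_eq_one_iff]
  simpa using hh

lemma D1_zero_add_D1_one_mul {h : ℝ} (hh : h ≠ 0) :
    D1 h 0 + D1 h 1 * (exp h + exp (-h)) = 0 := by
  have hq := one_sub_exp_two_mul_ne_zero hh
  rw [D1_zero, D1_one, exp_neg]
  rw [show 2 * h = h + h by ring, exp_add] at hq ⊢
  field_simp
  ring

lemma D1_zero_add_two_mul_D1_one {h : ℝ} (hh : h ≠ 0) :
    D1 h 0 + 2 * D1 h 1 = 2 * (1 - exp h) / (exp h + 1) := by
  have hq := one_sub_exp_two_mul_ne_zero hh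
  have hp : exp h + 1 ≠ 0 := by positivity
  rw [D1_zero, D1_one]
  rw [show 2 * h = h + h by ring, exp_add, ← sq] at hq ⊢
  rw [mul_div_assoc', ← add_div, div_eq_div_iff hq hp]
  ring

lemma f1_eq (t : ℝ) : f1 t = ((1 + exp (-1)) * exp t + (1 + exp 1) * exp (-t)) / 4 - 1 := by
  rw [f1, sub_eq_add_neg 1 t, sub_eq_add_neg t 1, exp_add, exp_add]
  ring

lemma D1_stencil_f1 {h : ℝ} (hh : h ≠ 0) (t : ℝ) :
    D1 h 0 * f1 t + D1 h 1 * (f1 (t - h) + f1 (t + h)) = 2 * (exp h - 1) / (exp h + 1) := by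
  simp only [f1_eq, sub_eq_add_neg t h, neg_add, exp_add, neg_neg]
  linear_combination ((1 + exp (-1)) * exp t + (1 + exp 1) * exp (-t)) / 4 *
    D1_zero_add_D1_one_mul hh - D1_zero_add_two_mul_D1_one hh

/-- For every `β ∈ ℤ`, `Σ_{γ∈ℤ} D₁(γ)·f₁(h(β − γ)) = 2(e^h − 1)/(e^h + 1)`
(the sum has only finitely many nonzero terms). -/
theorem D1_conv_f1 (N : ℕ) (hN : 1 ≤ N) (h : ℝ) (hh : h = 1 / N) (β : ℤ) :
    (Function.support fun γ : ℤ => D1 h γ * f1 (h * (β - γ))).Finite ∧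
    ∑' γ : ℤ, D1 h γ * f1 (h * (β - γ)) = 2 * (Real.exp h - 1) / (Real.exp h + 1) := by
  have hh0 : h ≠ 0 := by
    subst hh
    have : (0 : ℝ) < N := by exact_mod_cast hN
    positivity
  have hsupp : (Function.support fun γ : ℤ => D1 h γ * f1 (h * (β - γ))) ⊆ Finset.Icc (-1) 1 := by
    intro γ hγ
    by_contra hout
    refine hγ (mul_eq_zero_of_left (D1_eq_zero_of_one_lt_natAbs ?_) _)
    simp only [Finset.coe_Icc, Set.mem_Icc, not_and_or, not_le] at hout
    omega
  refine ⟨(Finset.Icc (-1) 1).finite_toSet.subset hsupp, ?_⟩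
  rw [tsum_eq_sum' hsupp, show Finset.Icc (-1 : ℤ) 1 = {-1, 0, 1} by rfl,
    Finset.sum_insert (by decide), Finset.sum_pair zero_ne_one, D1_neg,
    ← D1_stencil_f1 hh0 (h * β)]
  ring_nf
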